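/- Let n be a positive integer, t ∈ [0,2] a real number, and i an integer with 0 ≤ i ≤ n-1 such that t ∈ [2i/n, 2(i+1)/n]. Then the supremum over odd integers a of (-a² + 1 + 2atn - 2tn²)/4 is attained and equals -i(i+1) - (1/2)·n·(n-1-2i)·t. -/
import Mathlib


/-- For `t ∈ [2i/n, 2(i+1)/n]`, the maximum over odd integers `a` of
`(-a² + 1 + 2ant - 2n²t)/4` is attained and equals `-i(i+1) - (1/2)n(n-1-2i)t`. -/
theorem stmt0 (n : ℕ) (hn : 0 < n) (t : ℝ) (ht : t ∈ Set.Icc (0:ℝ) 2)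
    (i : ℤ) (hi0 : 0 ≤ i) (hi1 : i ≤ (n:ℤ) - 1)
    (hti : t ∈ Set.Icc (2*(i:ℝ)/(n:ℝ)) (2*((i:ℝ)+1)/(n:ℝ))) :
    IsGreatest {x : ℝ | ∃ a : ℤ, Odd a ∧
        x = (-(a:ℝ)^2 + 1 + 2*(a:ℝ)*t*(n:ℝ) - 2*t*(n:ℝ)^2)/4}
      (-(i:ℝ)*((i:ℝ)+1) - (1/2)*(n:ℝ)*((n:ℝ)-1-2*(i:ℝ))*t) := by
  have hnR : (0:ℝ) < n := by exact_mod_cast hn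
  obtain ⟨hlo, hhi⟩ := hti
  have h1 : 2*(i:ℝ) ≤ t * n := by
    have := (div_le_iff₀ hnR).mp hlo
    linarith
  have h2 : t * n ≤ 2*(i:ℝ) + 2 := by
    have h := (le_div_iff₀ hnR).mp hhi
    linarith
  constructor
  · refine ⟨2*i+1, ⟨i, by ring⟩, ?_⟩
    push_cast
    ring
  · rintro x ⟨a, ⟨k0, rfl⟩, rfl⟩
    set k : ℤ := k0 - i with hk
    have key : -(i:ℝ)*((i:ℝ)+1) - (1/2)*(n:ℝ)*((n:ℝ)-1-2*(i:ℝ))*t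
        - (-(((2*k0+1:ℤ)):ℝ)^2 + 1 + 2*((2*k0+1:ℤ):ℝ)*t*(n:ℝ) - 2*t*(n:ℝ)^2)/4
        = (k:ℝ) * ((k:ℝ) + (2*(i:ℝ)+1 - t*n)) := by
      push_cast [hk]
      ring
    have hc1 : -1 ≤ 2*(i:ℝ)+1 - t*n := by linarith
    have hc2 : 2*(i:ℝ)+1 - t*n ≤ 1 := by linarith
    have hnn : 0 ≤ (k:ℝ) * ((k:ℝ) + (2*(i:ℝ)+1 - t*n)) := by
      rcases lt_trichotomy k 0 with hk0 | hk0 | hk0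
      · have hk1 : k ≤ -1 := by omega
        have : (k:ℝ) ≤ -1 := by exact_mod_cast hk1
        nlinarith
      · simp [hk0]
      · have : (1:ℝ) ≤ (k:ℝ) := by exact_mod_cast hk0
        nlinarith
    linarith
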